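/- For p ∈ ℝ² with ‖p‖ > 1, define p^⊥ = (−p₂, p₁), τ(p) = (p + √(‖p‖² − 1)·p^⊥)/‖p‖², and T(p) = 2τ(p) − p. Then T(p) is the counterclockwise rotation of p by the angle π − 2·arcsin(1/‖p‖): T(p) = cos(π − 2arcsin(1/‖p‖))·p + sin(π − 2arcsin(1/‖p‖))·p^⊥. In particular ‖T(p)‖ = ‖p‖. -/
import Mathlib


noncomputable section

/-- Points of the plane, with the Euclidean norm. -/
abbrev Pt := EuclideanSpace ℝ (Fin 2)

/-- The point of the plane with coordinates `(x, y)`. -/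
def pt (x y : ℝ) : Pt := (WithLp.equiv 2 (Fin 2 → ℝ)).symm ![x, y]

/-- Rotation of `p` by `π/2`: `p^⊥ = (−p₂, p₁)`. -/
def perp (p : Pt) : Pt := pt (-(p 1)) (p 0)

/-- The tangency point of the support line from `p` to the closed unit disc. -/
def tangentPt (p : Pt) : Pt :=
  (‖p‖ ^ 2)⁻¹ • (p + Real.sqrt (‖p‖ ^ 2 - 1) • perp p)

/-- The circular-arc branch of the outer billiard map: reflection about the tangency point. -/
def T (p : Pt) : Pt := (2 : ℝ) • tangentPt p - p

theorem stmt7 (p : Pt) (hp : 1 < ‖p‖) :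
    T p = Real.cos (Real.pi - 2 * Real.arcsin (1 / ‖p‖)) • p
        + Real.sin (Real.pi - 2 * Real.arcsin (1 / ‖p‖)) • perp p ∧
    ‖T p‖ = ‖p‖ := by
  have hr : (0:ℝ) < ‖p‖ := lt_trans one_pos hp
  have hrne : ‖p‖ ≠ 0 := ne_of_gt hr
  have hb1 : (-1:ℝ) ≤ 1 / ‖p‖ := by
    have : (0:ℝ) ≤ 1 / ‖p‖ := by positivity
    linarith
  have hb2 : 1 / ‖p‖ ≤ 1 := by
    rw [div_le_one hr]; exact le_of_lt hp
  have h1 : Real.sin (Real.arcsin (1 / ‖p‖)) = 1 / ‖p‖ := Real.sin_arcsin hb1 hb2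
  have hsqnn : (0:ℝ) ≤ ‖p‖ ^ 2 - 1 := by nlinarith
  have h2 : Real.cos (Real.arcsin (1 / ‖p‖)) = Real.sqrt (‖p‖ ^ 2 - 1) / ‖p‖ := by
    rw [Real.cos_arcsin]
    have : 1 - (1 / ‖p‖) ^ 2 = (‖p‖ ^ 2 - 1) / ‖p‖ ^ 2 := by field_simp
    rw [this, Real.sqrt_div hsqnn, Real.sqrt_sq hr.le]
  have hc : Real.cos (Real.pi - 2 * Real.arcsin (1 / ‖p‖)) = 2 / ‖p‖ ^ 2 - 1 := by
    rw [Real.cos_pi_sub, Real.cos_two_mul, h2]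
    rw [div_pow, Real.sq_sqrt hsqnn]
    field_simp
    ring
  have hs : Real.sin (Real.pi - 2 * Real.arcsin (1 / ‖p‖))
      = 2 * Real.sqrt (‖p‖ ^ 2 - 1) / ‖p‖ ^ 2 := by
    rw [Real.sin_pi_sub, Real.sin_two_mul, h1, h2]
    ring
  have hperp0 : perp p 0 = -(p 1) := by simp [perp, pt]
  have hperp1 : perp p 1 = p 0 := by simp [perp, pt]
  have hTp : T p = (2 / ‖p‖ ^ 2 - 1) • p
      + (2 * Real.sqrt (‖p‖ ^ 2 - 1) / ‖p‖ ^ 2) • perp p := by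
    unfold T tangentPt
    ext i
    simp only [PiLp.add_apply, PiLp.sub_apply, PiLp.smul_apply, smul_eq_mul]
    field_simp
    ring
  have hr2 : ‖p‖ ^ 2 = p 0 ^ 2 + p 1 ^ 2 := by
    have h := EuclideanSpace.norm_eq p
    rw [h, Real.sq_sqrt (by positivity)]
    simp [Fin.sum_univ_two, sq_abs]
  refine ⟨by rw [hc, hs]; exact hTp, ?_⟩
  have hT0 : T p 0 = (2 / ‖p‖ ^ 2 - 1) * p 0 - (2 * Real.sqrt (‖p‖ ^ 2 - 1) / ‖p‖ ^ 2) * p 1 := by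
    rw [hTp]
    simp only [PiLp.add_apply, PiLp.smul_apply, smul_eq_mul, hperp0]
    ring
  have hT1 : T p 1 = (2 / ‖p‖ ^ 2 - 1) * p 1 + (2 * Real.sqrt (‖p‖ ^ 2 - 1) / ‖p‖ ^ 2) * p 0 := by
    rw [hTp]
    simp only [PiLp.add_apply, PiLp.smul_apply, smul_eq_mul, hperp1]
  have hkey : T p 0 ^ 2 + T p 1 ^ 2 = p 0 ^ 2 + p 1 ^ 2 := by
    rw [hT0, hT1]
    have hss : Real.sqrt (‖p‖ ^ 2 - 1) ^ 2 = ‖p‖ ^ 2 - 1 := Real.sq_sqrt hsqnn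
    have hne : ‖p‖ ^ 2 ≠ 0 := by positivity
    field_simp
    nlinarith [hss, hr2]
  rw [EuclideanSpace.norm_eq (T p), EuclideanSpace.norm_eq p]
  congr 1
  simpa [Fin.sum_univ_two, sq_abs] using hkey
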